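/- arXiv:2411.11482 — 3 statements merged into one kernel-verified Lean document; each statement's English description precedes it below -/
import Mathlib

section
/- For every pattern τ in S_3, the number of permutations in S_n avoiding τ equals the n-th Catalan number C_n = (1/(n+1))·binomial(2n, n). -/
/-!
Reversal `σ ↦ σ * revPerm` and complement `σ ↦ revPerm * σ`, applied to permutation and pattern
alike, preserve containment. They split `S₃` into the classes `{123, 321}` and
`{132, 231, 213, 312}`, so it suffices to count the avoiders of `231` and to compare those of
`123` and `132`. Permutations are read as lists of their values, occurrences as sublists.

A list `x :: xs` avoids `231` exactly when `xs` lists all its entries below `x` before all its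
entries above `x`, both parts avoiding `231`; this is the Catalan recursion.

Both `123` and `132` begin with their smallest letter. Count the arrangements `l` of a set such
that `m :: l` avoids the pattern: if the first entry `x` of `l` is below `m`, the bound becomes
`x`; if it is above `m`, it must be the largest (for `123`) or the smallest (for `132`) entry
above `m`. Both counts thus satisfy the same recursion in the numbers of entries below and
above `m`, and they agree.
-/

/-- `σ` contains the pattern `τ ∈ S_3`. -/
def ContainsPattern {n : ℕ} (σ : Equiv.Perm (Fin n)) (τ : Equiv.Perm (Fin 3)) : Prop :=
  ∃ f : Fin 3 → Fin n, StrictMono f ∧ ∀ j k : Fin 3, σ (f j) < σ (f k) ↔ τ j < τ k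

open Finset
open scoped List

section Triples

variable {α : Type*}

def ContainsTriple (R : α → α → α → Prop) (l : List α) : Prop :=
  ∃ a b c, [a, b, c] <+ l ∧ R a b c

variable {R : α → α → α → Prop} {l l' : List α} {x : α} {xs : List α}

theorem ContainsTriple.mono (h : ContainsTriple R l) (hl : l <+ l') : ContainsTriple R l' :=
  let ⟨a, b, c, habc, hR⟩ := h
  ⟨a, b, c, habc.trans hl, hR⟩

theorem ContainsTriple.three_le_length (h : ContainsTriple R l) : 3 ≤ l.length :=
  let ⟨_, _, _, habc, _⟩ := h
  habc.length_le

theorem containsTriple_cons :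
    ContainsTriple R (x :: xs) ↔ ContainsTriple R xs ∨ ∃ b c, [b, c] <+ xs ∧ R x b c := by
  constructor
  · rintro ⟨a, b, c, habc, hR⟩
    rcases List.sublist_cons_iff.1 habc with habc | ⟨r, hr, hbc⟩
    · exact Or.inl ⟨a, b, c, habc, hR⟩
    · obtain ⟨rfl, rfl⟩ := List.cons.inj hr
      exact Or.inr ⟨b, c, hbc, hR⟩
  · rintro (h | ⟨b, c, hbc, hR⟩)
    · exact h.mono (List.sublist_cons_self x xs)
    · exact ⟨x, b, c, hbc.cons_cons x, hR⟩

end Triples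

section MinFirst

variable {α : Type*} [LinearOrder α] {q : α → α → Prop} {m x : α} {xs : List α}

/-- The pattern `1 ⊕ q`: `MinFirst (· < ·)` is `123` and `MinFirst (· > ·)` is `132`. -/
def MinFirst (q : α → α → Prop) (a b c : α) : Prop := a < b ∧ a < c ∧ q b c

theorem containsTriple_minFirst_cons_cons_of_lt (hx : x < m) :
    ContainsTriple (MinFirst q) (m :: x :: xs) ↔ ContainsTriple (MinFirst q) (x :: xs) := by
  refine ⟨fun h => ?_, fun h => h.mono (List.sublist_cons_self m _)⟩
  rcases containsTriple_cons.1 h with h | ⟨b, c, hbc, hmb, hmc, hq⟩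
  · exact h
  rcases List.sublist_cons_iff.1 hbc with hbc | ⟨r, hr, -⟩
  · exact containsTriple_cons.2 (Or.inr ⟨b, c, hbc, hx.trans hmb, hx.trans hmc, hq⟩)
  · obtain ⟨rfl, -⟩ := List.cons.inj hr
    exact absurd hx hmb.not_gt

theorem containsTriple_minFirst_cons_cons_of_gt (hx : m < x) :
    ContainsTriple (MinFirst q) (m :: x :: xs) ↔
      ContainsTriple (MinFirst q) (m :: xs) ∨ ∃ y ∈ xs, m < y ∧ q x y := by
  constructor
  · intro h
    rcases containsTriple_cons.1 h with h | ⟨b, c, hbc, hmb, hmc, hq⟩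
    · rcases containsTriple_cons.1 h with h | ⟨b, c, hbc, hxb, hxc, hq⟩
      · exact Or.inl (h.mono (List.sublist_cons_self m xs))
      · exact Or.inl <| containsTriple_cons.2 <|
          Or.inr ⟨b, c, hbc, hx.trans hxb, hx.trans hxc, hq⟩
    · rcases List.sublist_cons_iff.1 hbc with hbc | ⟨r, hr, hc⟩
      · exact Or.inl (containsTriple_cons.2 (Or.inr ⟨b, c, hbc, hmb, hmc, hq⟩))
      · obtain ⟨rfl, rfl⟩ := List.cons.inj hr
        exact Or.inr ⟨c, List.singleton_sublist.1 hc, hmc, hq⟩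
  · rintro (h | ⟨y, hy, hmy, hq⟩)
    · exact h.mono ((List.sublist_cons_self x xs).cons_cons m)
    · exact ⟨m, x, y, ((List.singleton_sublist.2 hy).cons_cons x).cons_cons m, hx, hmy, hq⟩

end MinFirst

section Arrangements

variable {α : Type*}

def arrangements (S : Finset α) : Finset (List α) :=
  ⟨S.val.lists, Multiset.lists_nodup_finset S⟩

variable {S : Finset α} {l : List α} {x : α}

theorem mem_arrangements : l ∈ arrangements S ↔ (l : Multiset α) = S.val := by
  rw [arrangements, Finset.mem_mk, Multiset.mem_lists_iff, eq_comm]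
  rfl

theorem mem_iff_of_mem_arrangements (hl : l ∈ arrangements S) {y : α} : y ∈ l ↔ y ∈ S := by
  rw [← Multiset.mem_coe, mem_arrangements.1 hl, Finset.mem_val]

theorem arrangements_empty : arrangements (∅ : Finset α) = {[]} := by
  ext l
  rw [mem_arrangements, Finset.mem_singleton, Finset.empty_val, Multiset.coe_eq_zero]

theorem filter_mem_arrangements (hl : l ∈ arrangements S) (p : α → Prop) [DecidablePred p] :
    l.filter p ∈ arrangements {y ∈ S | p y} := by
  rw [mem_arrangements, ← Multiset.filter_coe, mem_arrangements.1 hl, Finset.filter_val]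

variable [DecidableEq α]

theorem cons_mem_arrangements :
    x :: l ∈ arrangements S ↔ x ∈ S ∧ l ∈ arrangements (S.erase x) := by
  rw [mem_arrangements, mem_arrangements, Finset.erase_val, ← Multiset.cons_coe]
  constructor
  · intro h
    rw [← h, Multiset.erase_cons_head]
    exact ⟨by rw [← Finset.mem_val, ← h]; exact Multiset.mem_cons_self x _, rfl⟩
  · rintro ⟨hx, h⟩
    rw [h, Multiset.cons_erase (Finset.mem_val.mpr hx)]

theorem card_filter_arrangements_eq_sum (hS : S.Nonempty) (P : List α → Prop)
    [DecidablePred P] :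
    #{l ∈ arrangements S | P l} =
      ∑ x ∈ S, #{l ∈ arrangements (S.erase x) | P (x :: l)} := by
  rw [← card_sigma]
  symm
  refine card_bij (fun p _ => p.1 :: p.2) ?_ ?_ ?_
  · rintro ⟨x, l⟩ hp
    simp only [mem_sigma, Finset.mem_filter] at hp ⊢
    exact ⟨cons_mem_arrangements.2 ⟨hp.1, hp.2.1⟩, hp.2.2⟩
  · rintro ⟨x, l⟩ - ⟨y, l'⟩ - h
    obtain ⟨rfl, rfl⟩ := List.cons.inj h
    rfl
  · rintro (_ | ⟨x, l⟩) hl <;> rw [Finset.mem_filter] at hl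
    · rw [mem_arrangements, Multiset.coe_nil, eq_comm, Finset.val_eq_zero] at hl
      exact absurd hl.1 hS.ne_empty
    · obtain ⟨⟨hx, hl⟩, hP⟩ := cons_mem_arrangements.1 hl.1, hl.2
      refine ⟨⟨x, l⟩, ?_, rfl⟩
      simp only [mem_sigma, Finset.mem_filter]
      exact ⟨hx, hl, hP⟩

end Arrangements

section Avoiders

variable {α : Type*} {R : α → α → α → Prop} {S : Finset α} {m : α}

open Classical in
noncomputable def avoiders (R : α → α → α → Prop) (S : Finset α) : Finset (List α) :=
  {l ∈ arrangements S | ¬ContainsTriple R l}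

open Classical in
noncomputable def avoidersAfter (R : α → α → α → Prop) (m : α) (S : Finset α) :
    Finset (List α) :=
  {l ∈ arrangements S | ¬ContainsTriple R (m :: l)}

theorem mem_avoiders {l : List α} :
    l ∈ avoiders R S ↔ l ∈ arrangements S ∧ ¬ContainsTriple R l := by
  classical
  exact Finset.mem_filter

theorem mem_avoidersAfter {l : List α} :
    l ∈ avoidersAfter R m S ↔ l ∈ arrangements S ∧ ¬ContainsTriple R (m :: l) := by
  classical
  exact Finset.mem_filter

theorem card_avoiders_empty : #(avoiders R ∅) = 1 := by
  rw [avoiders, arrangements_empty, filter_singleton,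
    if_pos fun h => by simpa using h.three_le_length, card_singleton]

theorem card_avoidersAfter_empty : #(avoidersAfter R m ∅) = 1 := by
  rw [avoidersAfter, arrangements_empty, filter_singleton,
    if_pos fun h => by simpa using h.three_le_length, card_singleton]

theorem card_avoiders_eq_sum [DecidableEq α] (hS : S.Nonempty) :
    #(avoiders R S) = ∑ x ∈ S, #(avoidersAfter R x (S.erase x)) := by
  classical
  exact card_filter_arrangements_eq_sum hS _

end Avoiders

section OneTwoThree

variable {α : Type*} [LinearOrder α]

theorem filter_forall_not_lt_eq_max' {T : Finset α} (hT : T.Nonempty) :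
    {x ∈ T | ∀ y ∈ T.erase x, ¬x < y} = {T.max' hT} := by
  refine eq_singleton_iff_unique_mem.2 ⟨mem_filter.2 ⟨T.max'_mem hT, fun y hy => ?_⟩, ?_⟩
  · exact not_lt.2 (T.le_max' y (mem_of_mem_erase hy))
  · intro x hx
    rw [mem_filter] at hx
    by_contra hne
    exact hx.2 _ (mem_erase.2 ⟨Ne.symm hne, T.max'_mem hT⟩)
      (lt_of_le_of_ne (T.le_max' x hx.1) hne)

theorem filter_forall_not_gt_eq_min' {T : Finset α} (hT : T.Nonempty) :
    {x ∈ T | ∀ y ∈ T.erase x, ¬x > y} = {T.min' hT} := by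
  refine eq_singleton_iff_unique_mem.2 ⟨mem_filter.2 ⟨T.min'_mem hT, fun y hy => ?_⟩, ?_⟩
  · exact not_lt.2 (T.min'_le y (mem_of_mem_erase hy))
  · intro x hx
    rw [mem_filter] at hx
    by_contra hne
    exact hx.2 _ (mem_erase.2 ⟨Ne.symm hne, T.min'_mem hT⟩)
      (lt_of_le_of_ne (T.min'_le x hx.1) (Ne.symm hne))

variable {q : α → α → Prop} [DecidableRel q] {S : Finset α} {m : α}

theorem filter_not_lt_eq_filter_gt {U : Finset α} (hm : m ∉ U) :
    {x ∈ U | ¬x < m} = {x ∈ U | m < x} :=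
  filter_congr fun x hx => by
    rw [not_lt, le_iff_lt_or_eq, or_iff_left (ne_of_mem_of_not_mem hx hm).symm]

theorem card_avoidersAfter_minFirst_eq_add (hS : S.Nonempty) (hm : m ∉ S) :
    #(avoidersAfter (MinFirst q) m S) =
      ∑ x ∈ S with x < m, #(avoidersAfter (MinFirst q) x (S.erase x)) +
      ∑ x ∈ {x ∈ S | m < x} with ∀ y ∈ {x ∈ S | m < x}.erase x, ¬q x y,
        #(avoidersAfter (MinFirst q) m (S.erase x)) := by
  classical
  rw [avoidersAfter, card_filter_arrangements_eq_sum hS,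
    ← sum_filter_add_sum_filter_not S (· < m)]
  congr 1
  · refine sum_congr rfl fun x hx => ?_
    simp_rw [containsTriple_minFirst_cons_cons_of_lt (mem_filter.1 hx).2]
    rfl
  · rw [filter_not_lt_eq_filter_gt hm, sum_filter (s := {x ∈ S | m < x})]
    refine sum_congr rfl fun x hx => ?_
    have hmx := (mem_filter.1 hx).2
    have hexists : ∀ l ∈ arrangements (S.erase x),
        (∃ y ∈ l, m < y ∧ q x y) ↔ ∃ y ∈ {x ∈ S | m < x}.erase x, q x y := fun l hl => by
      simp only [mem_iff_of_mem_arrangements hl, mem_erase, mem_filter]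
      grind
    simp_rw [containsTriple_minFirst_cons_cons_of_gt hmx, not_or]
    split_ifs with h
    · refine congrArg card (filter_congr fun l hl => ?_)
      simp only [hexists l hl]
      grind
    · refine card_eq_zero.2 (filter_eq_empty_iff.2 fun l hl => ?_)
      simp only [hexists l hl]
      grind

theorem filter_lt_eq_of_forall_lt_mem_iff {S S' : Finset α} (hlow : ∀ y < m, y ∈ S ↔ y ∈ S') :
    {x ∈ S | x < m} = {x ∈ S' | x < m} := by
  ext x
  simp only [mem_filter]
  exact and_congr_left (hlow x)

theorem card_filter_gt_eq_of_forall_lt_mem_iff {S S' : Finset α} (hm : m ∉ S) (hm' : m ∉ S')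
    (hcard : #S = #S') (hlow : ∀ y < m, y ∈ S ↔ y ∈ S') :
    #{x ∈ S | m < x} = #{x ∈ S' | m < x} := by
  have h := card_filter_add_card_filter_not (s := S) (· < m)
  have h' := card_filter_add_card_filter_not (s := S') (· < m)
  rw [filter_not_lt_eq_filter_gt hm, filter_lt_eq_of_forall_lt_mem_iff hlow] at h
  rw [filter_not_lt_eq_filter_gt hm'] at h'
  omega

theorem card_avoidersAfter_minFirst_lt_eq_gt {S S' : Finset α} (hm : m ∉ S) (hm' : m ∉ S')
    (hcard : #S = #S') (hlow : ∀ y < m, y ∈ S ↔ y ∈ S') :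
    #(avoidersAfter (MinFirst (· < ·)) m S) = #(avoidersAfter (MinFirst (· > ·)) m S') := by
  induction hn : #S generalizing S S' m with
  | zero =>
    rw [card_eq_zero.1 hn, card_eq_zero.1 (hcard.symm.trans hn), card_avoidersAfter_empty,
      card_avoidersAfter_empty]
  | succ n ih =>
    have hS : S.Nonempty := card_pos.1 (by omega)
    have hS' : S'.Nonempty := card_pos.1 (by omega)
    rw [card_avoidersAfter_minFirst_eq_add hS hm, card_avoidersAfter_minFirst_eq_add hS' hm']
    congr 1
    · rw [filter_lt_eq_of_forall_lt_mem_iff hlow]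
      refine sum_congr rfl fun x hx => ?_
      obtain ⟨hxS', hxm⟩ := mem_filter.1 hx
      have hxS := (hlow x hxm).2 hxS'
      refine ih (notMem_erase x S) (notMem_erase x S') ?_ ?_ ?_
      · rw [card_erase_of_mem hxS, card_erase_of_mem hxS', hcard]
      · intro y hy
        simp only [mem_erase, hlow y (hy.trans hxm)]
      · rw [card_erase_of_mem hxS, hn, Nat.add_sub_cancel]
    · have hT := card_filter_gt_eq_of_forall_lt_mem_iff hm hm' hcard hlow
      rcases ({x ∈ S | m < x} : Finset α).eq_empty_or_nonempty with hE | hne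
      · rw [hE, card_empty, eq_comm, card_eq_zero] at hT
        rw [hE, hT, filter_empty, filter_empty, sum_empty, sum_empty]
      have hne' : ({x ∈ S' | m < x} : Finset α).Nonempty := card_pos.1 (hT ▸ card_pos.2 hne)
      rw [filter_forall_not_lt_eq_max' hne, filter_forall_not_gt_eq_min' hne', sum_singleton,
        sum_singleton]
      have hM := mem_filter.1 (max'_mem _ hne)
      have hM' := mem_filter.1 (min'_mem _ hne')
      refine ih (fun h => hm (mem_of_mem_erase h)) (fun h => hm' (mem_of_mem_erase h)) ?_ ?_ ?_
      · rw [card_erase_of_mem hM.1, card_erase_of_mem hM'.1, hcard]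
      · intro y hy
        rw [mem_erase, mem_erase, hlow y hy]
        exact and_congr_left fun _ => iff_of_true (hy.trans hM.2).ne (hy.trans hM'.2).ne
      · rw [card_erase_of_mem hM.1, hn, Nat.add_sub_cancel]

theorem card_avoiders_minFirst_lt_eq_gt (S : Finset α) :
    #(avoiders (MinFirst (· < ·)) S) = #(avoiders (MinFirst (· > ·)) S) := by
  rcases S.eq_empty_or_nonempty with rfl | hS
  · rw [card_avoiders_empty, card_avoiders_empty]
  rw [card_avoiders_eq_sum hS, card_avoiders_eq_sum hS]
  exact sum_congr rfl fun x _ => card_avoidersAfter_minFirst_lt_eq_gt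
    (notMem_erase x S) (notMem_erase x S) rfl fun _ _ => Iff.rfl

end OneTwoThree

section TwoThreeOne

variable {α : Type*} [LinearOrder α]

theorem sum_ranks_eq_sum_antidiagonal {M : Type*} [AddCommMonoid M] (S : Finset α) {k : ℕ}
    (hk : #S = k + 1) (f : ℕ → ℕ → M) :
    ∑ x ∈ S, f #{y ∈ S | y < x} #{y ∈ S | x < y} = ∑ p ∈ antidiagonal k, f p.1 p.2 := by
  set r : α → ℕ × ℕ := fun x => (#{y ∈ S | y < x}, #{y ∈ S | x < y})
  have hmaps : ∀ x ∈ S, r x ∈ antidiagonal k := fun x hx => by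
    have hsplit := card_filter_add_card_filter_not (s := S) (· < x)
    have hge : {y ∈ S | ¬y < x} = insert x {y ∈ S | x < y} := by
      ext y
      simp only [mem_filter, mem_insert, not_lt]
      grind
    rw [hge, card_insert_of_notMem (by simp)] at hsplit
    rw [HasAntidiagonal.mem_antidiagonal]
    change #{y ∈ S | y < x} + #{y ∈ S | x < y} = k
    omega
  have hinj : Set.InjOn r S := by
    intro x hx y hy hxy
    by_contra hne
    wlog hlt : x < y generalizing x y
    · exact this hy hx hxy.symm (Ne.symm hne) (lt_of_le_of_ne (not_lt.1 hlt) (Ne.symm hne))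
    have hsub : {z ∈ S | z < x} ⊂ {z ∈ S | z < y} :=
      (ssubset_iff_of_subset fun z hz => mem_filter.2
        ⟨(mem_filter.1 hz).1, (mem_filter.1 hz).2.trans hlt⟩).2
        ⟨x, mem_filter.2 ⟨hx, hlt⟩, fun h => lt_irrefl x (mem_filter.1 h).2⟩
    exact (card_lt_card hsub).ne (congrArg Prod.fst hxy)
  exact sum_nbij r hmaps hinj
    (surjOn_of_injOn_of_card_le r hmaps hinj (by rw [Nat.card_antidiagonal, hk]))
    fun _ _ => rfl

def Pattern231 (a b c : α) : Prop := c < a ∧ a < b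

variable {x : α} {xs : List α}

theorem containsTriple_pattern231_cons (hx : x ∉ xs) :
    ContainsTriple Pattern231 (x :: xs) ↔
      ¬xs.Pairwise (fun b c => x < b → x < c) ∨
        ContainsTriple Pattern231 (xs.filter (· < x)) ∨
        ContainsTriple Pattern231 (xs.filter (x < ·)) := by
  have hne : ∀ {y}, y ∈ xs → y ≠ x := fun hy h => hx (h ▸ hy)
  rw [containsTriple_cons, List.pairwise_iff_forall_sublist]
  constructor
  · rintro (⟨a, b, c, habc, hca, hab⟩ | ⟨b, c, hbc, hcx, hxb⟩)
    · by_cases hsplit : ∀ {b c}, [b, c] <+ xs → x < b → x < c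
      · right
        have hbc : [b, c] <+ xs := (List.sublist_cons_self a [b, c]).trans habc
        rcases lt_or_gt_of_ne (hne (habc.subset (by simp) : a ∈ xs)) with hax | hxa
        · have hbx : b < x := lt_of_le_of_ne
            (not_lt.1 fun hxb => (hsplit hbc hxb).not_gt (hca.trans hax))
            (hne (hbc.subset (by simp)))
          refine Or.inl ⟨a, b, c, ?_, hca, hab⟩
          simpa [hax, hbx, hca.trans hax] using habc.filter (· < x)
        · have hxc := hsplit hbc (hxa.trans hab)
          refine Or.inr ⟨a, b, c, ?_, hca, hab⟩
          simpa [hxa, hxa.trans hab, hxc] using habc.filter (x < ·)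
      · exact Or.inl hsplit
    · exact Or.inl fun hsplit => (hsplit hbc hxb).not_gt hcx
  · rintro (hsplit | h | h)
    · push Not at hsplit
      obtain ⟨b, c, hbc, hxb, hcx⟩ := hsplit
      exact Or.inr ⟨b, c, hbc, lt_of_le_of_ne hcx (hne (hbc.subset (by simp))), hxb⟩
    · exact Or.inl (h.mono (List.filter_sublist))
    · exact Or.inl (h.mono (List.filter_sublist))

theorem filter_lt_append_filter_gt (hx : x ∉ xs) (h : xs.Pairwise (fun b c => x < b → x < c)) :
    xs.filter (· < x) ++ xs.filter (x < ·) = xs := by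
  induction xs with
  | nil => rfl
  | cons y ys ih =>
    rw [List.pairwise_cons] at h
    have hys : x ∉ ys := fun h' => hx (List.mem_cons_of_mem y h')
    rcases lt_or_gt_of_ne (fun e : y = x => hx (e ▸ List.mem_cons_self)) with hyx | hxy
    · simp [hyx, hyx.not_gt, ih hys h.2]
    · have hall : ∀ z ∈ y :: ys, x < z := by
        simpa using ⟨hxy, fun z hz => h.1 z hz hxy⟩
      rw [List.filter_eq_nil_iff.2 (by simpa using fun z hz => (hall z hz).le),
        List.filter_eq_self.2 (by simpa using hall), List.nil_append]

theorem filter_append_of_forall_lt_of_forall_gt {l₁ l₂ : List α} (h₁ : ∀ y ∈ l₁, y < x)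
    (h₂ : ∀ y ∈ l₂, x < y) :
    (l₁ ++ l₂).filter (· < x) = l₁ ∧ (l₁ ++ l₂).filter (x < ·) = l₂ := by
  rw [List.filter_append, List.filter_append, List.filter_eq_self.2 (by simpa using h₁),
    List.filter_eq_nil_iff.2 (by simpa using fun y hy => (h₂ y hy).le),
    List.filter_eq_nil_iff.2 (by simpa using fun y hy => (h₁ y hy).le),
    List.filter_eq_self.2 (by simpa using h₂)]
  simp

theorem mem_avoidersAfter_pattern231 {T : Finset α} (hx : x ∉ T) {l : List α} :
    l ∈ avoidersAfter Pattern231 x T ↔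
      l ∈ arrangements T ∧ l.Pairwise (fun b c => x < b → x < c) ∧
        ¬ContainsTriple Pattern231 (l.filter (· < x)) ∧
        ¬ContainsTriple Pattern231 (l.filter (x < ·)) := by
  rw [mem_avoidersAfter]
  refine and_congr_right fun hl => ?_
  rw [containsTriple_pattern231_cons fun h => hx ((mem_iff_of_mem_arrangements hl).1 h),
    not_or, not_or, not_not]

theorem card_avoidersAfter_pattern231 {T : Finset α} (hx : x ∉ T) :
    #(avoidersAfter Pattern231 x T) =
      #(avoiders Pattern231 {y ∈ T | y < x}) * #(avoiders Pattern231 {y ∈ T | x < y}) := by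
  have hsides : ∀ {l₁ l₂ : List α}, l₁ ∈ arrangements {y ∈ T | y < x} →
      l₂ ∈ arrangements {y ∈ T | x < y} →
      (∀ y ∈ l₁, y < x) ∧ ∀ y ∈ l₂, x < y :=
    fun h₁ h₂ => ⟨fun y hy => (mem_filter.1 ((mem_iff_of_mem_arrangements h₁).1 hy)).2,
      fun y hy => (mem_filter.1 ((mem_iff_of_mem_arrangements h₂).1 hy)).2⟩
  rw [← card_product]
  refine card_nbij' (fun l => (l.filter (· < x), l.filter (x < ·))) (fun p => p.1 ++ p.2)
    ?_ ?_ ?_ ?_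
  · intro l hl
    obtain ⟨hl, -, h₁, h₂⟩ := (mem_avoidersAfter_pattern231 hx).1 hl
    simp only [mem_coe, mem_product, mem_avoiders]
    exact ⟨⟨filter_mem_arrangements hl _, h₁⟩, ⟨filter_mem_arrangements hl _, h₂⟩⟩
  · rintro ⟨l₁, l₂⟩ hp
    simp only [mem_coe, mem_product, mem_avoiders] at hp
    obtain ⟨h₁, h₂⟩ := hsides hp.1.1 hp.2.1
    obtain ⟨hf₁, hf₂⟩ := filter_append_of_forall_lt_of_forall_gt h₁ h₂
    rw [mem_coe, mem_avoidersAfter_pattern231 hx, hf₁, hf₂, mem_arrangements,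
      ← Multiset.coe_add, mem_arrangements.1 hp.1.1, mem_arrangements.1 hp.2.1,
      ← filter_not_lt_eq_filter_gt hx, filter_val, filter_val, Multiset.filter_add_not]
    refine ⟨rfl, List.pairwise_append.2 ⟨?_, ?_, ?_⟩, hp.1.2, hp.2.2⟩
    · exact List.pairwise_of_forall_mem_list fun b hb _ _ hxb => absurd hxb (h₁ b hb).not_gt
    · exact List.pairwise_of_forall_mem_list fun _ _ c hc _ => h₂ c hc
    · exact fun b hb _ _ hxb => absurd hxb (h₁ b hb).not_gt
  · intro l hl
    obtain ⟨hl, hsplit, -⟩ := (mem_avoidersAfter_pattern231 hx).1 hl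
    exact filter_lt_append_filter_gt (fun h => hx ((mem_iff_of_mem_arrangements hl).1 h)) hsplit
  · rintro ⟨l₁, l₂⟩ hp
    simp only [mem_coe, mem_product, mem_avoiders] at hp
    obtain ⟨h₁, h₂⟩ := hsides hp.1.1 hp.2.1
    obtain ⟨hf₁, hf₂⟩ := filter_append_of_forall_lt_of_forall_gt h₁ h₂
    exact Prod.ext hf₁ hf₂

theorem card_avoiders_pattern231 (S : Finset α) : #(avoiders Pattern231 S) = catalan #S := by
  induction hn : #S using Nat.strong_induction_on generalizing S with
  | _ n ih =>
  rcases n with _ | k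
  · rw [card_eq_zero.1 hn, card_avoiders_empty, catalan_zero]
  have hS : S.Nonempty := card_pos.1 (by omega)
  rw [card_avoiders_eq_sum hS, catalan_succ',
    ← sum_ranks_eq_sum_antidiagonal S hn fun i j => catalan i * catalan j]
  refine sum_congr rfl fun x hx => ?_
  have hlt : ∀ p : α → Prop, [DecidablePred p] → ¬p x → #{y ∈ S | p y} < k + 1 :=
    fun p _ hpx => hn ▸ card_lt_card (filter_ssubset.2 ⟨x, hx, hpx⟩)
  rw [card_avoidersAfter_pattern231 (notMem_erase x S), filter_erase, filter_erase,
    erase_eq_of_notMem (by simp), erase_eq_of_notMem (by simp),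
    ih _ (hlt (· < x) (lt_irrefl x)) _ rfl, ih _ (hlt (x < ·) (lt_irrefl x)) _ rfl]

end TwoThreeOne

section Permutations

open Equiv

variable {α : Type*}

theorem List.ofFn_sublist_ofFn_iff {k n : ℕ} {u : Fin k → α} {v : Fin n → α} :
    List.ofFn u <+ List.ofFn v ↔ ∃ f : Fin k ↪o Fin n, u = v ∘ f := by
  rw [List.sublist_iff_exists_fin_orderEmbedding_get_eq]
  constructor
  · rintro ⟨f, hf⟩
    refine ⟨(Fin.castOrderIso List.length_ofFn).symm.toOrderEmbedding.trans
      (f.trans (Fin.castOrderIso List.length_ofFn).toOrderEmbedding), funext fun i => ?_⟩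
    have h := hf (Fin.cast List.length_ofFn.symm i)
    simp only [List.get_eq_getElem, List.getElem_ofFn] at h
    exact h
  · rintro ⟨f, rfl⟩
    refine ⟨(Fin.castOrderIso List.length_ofFn).toOrderEmbedding.trans
      (f.trans (Fin.castOrderIso List.length_ofFn.symm).toOrderEmbedding), fun i => ?_⟩
    simp only [List.get_eq_getElem, List.getElem_ofFn]
    rfl

def HasOrderType [LT α] (τ : Perm (Fin 3)) (a b c : α) : Prop :=
  ∀ j k, ![a, b, c] j < ![a, b, c] k ↔ τ j < τ k

variable {n : ℕ} {σ : Perm (Fin n)} {τ : Perm (Fin 3)}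

theorem containsPattern_iff :
    ContainsPattern σ τ ↔ ContainsTriple (HasOrderType τ) (List.ofFn σ) := by
  constructor
  · rintro ⟨f, hf, hτ⟩
    have hσf : ![σ (f 0), σ (f 1), σ (f 2)] = σ ∘ f := by
      ext j
      fin_cases j <;> rfl
    refine ⟨σ (f 0), σ (f 1), σ (f 2), ?_, fun j k => by rw [hσf]; exact hτ j k⟩
    have h := List.ofFn_sublist_ofFn_iff.2 ⟨OrderEmbedding.ofStrictMono f hf, hσf⟩
    simpa using h
  · rintro ⟨a, b, c, habc, hτ⟩
    obtain ⟨f, hf⟩ := (List.ofFn_sublist_ofFn_iff (u := ![a, b, c])).1 (by simpa using habc)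
    exact ⟨f, f.strictMono, fun j k => by simpa [hf] using hτ j k⟩

theorem ofFn_mem_arrangements_univ (σ : Perm (Fin n)) : List.ofFn σ ∈ arrangements univ := by
  rw [mem_arrangements, ← Fin.univ_val_map]
  exact congrArg Finset.val (map_univ_equiv σ)

theorem card_avoiding_eq_card_avoiders :
    Nat.card {σ : Perm (Fin n) // ¬ContainsPattern σ τ} =
      #(avoiders (HasOrderType τ) (univ : Finset (Fin n))) := by
  classical
  rw [Nat.card_eq_fintype_card, Fintype.card_subtype]
  refine card_bij (fun σ _ => List.ofFn σ) (fun σ hσ => ?_) (fun σ _ σ' _ h => ?_)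
    fun l hl => ?_
  · rw [mem_avoiders, ← containsPattern_iff]
    exact ⟨ofFn_mem_arrangements_univ σ, (mem_filter.1 hσ).2⟩
  · exact Equiv.ext (congrFun (List.ofFn_injective h))
  · obtain ⟨hl, hlτ⟩ := mem_avoiders.1 hl
    have hnd : l.Nodup := by
      rw [← Multiset.coe_nodup, mem_arrangements.1 hl]
      exact univ.nodup
    have hmem : ∀ i, i ∈ l := fun i => (mem_iff_of_mem_arrangements hl).2 (mem_univ i)
    have hlen : l.length = n := by
      rw [← Multiset.coe_card, mem_arrangements.1 hl, card_val, card_univ, Fintype.card_fin]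
    let e := (finCongr hlen.symm).trans (hnd.getEquivOfForallMemList l hmem)
    have he : List.ofFn e = l := by
      rw [List.ofFn_congr hlen.symm]
      simp [e]
    refine ⟨e, mem_filter.2 ⟨mem_univ _, ?_⟩, he⟩
    rw [containsPattern_iff, he]
    exact hlτ

end Permutations

section Symmetries

open Equiv Fin

variable {n : ℕ} {σ : Perm (Fin n)} {τ : Perm (Fin 3)}

theorem Fin.revPerm_mul_revPerm {m : ℕ} : (revPerm : Perm (Fin m)) * revPerm = 1 :=
  Equiv.ext rev_rev

theorem ContainsPattern.mul_revPerm (h : ContainsPattern σ τ) :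
    ContainsPattern (σ * revPerm) (τ * revPerm) := by
  obtain ⟨f, hf, hτ⟩ := h
  refine ⟨rev ∘ f ∘ rev, fun i j hij => rev_lt_rev.2 (hf (rev_lt_rev.2 hij)), fun j k => ?_⟩
  simpa using hτ (rev j) (rev k)

theorem ContainsPattern.revPerm_mul (h : ContainsPattern σ τ) :
    ContainsPattern (revPerm * σ) (revPerm * τ) := by
  obtain ⟨f, hf, hτ⟩ := h
  exact ⟨f, hf, fun j k => by simpa using hτ k j⟩

theorem card_avoiding_mul_revPerm :
    Nat.card {σ : Perm (Fin n) // ¬ContainsPattern σ (τ * revPerm)} =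
      Nat.card {σ : Perm (Fin n) // ¬ContainsPattern σ τ} := by
  refine Nat.card_congr ((Equiv.mulRight revPerm).subtypeEquiv fun σ => not_congr ?_).symm
  refine ⟨ContainsPattern.mul_revPerm, fun h => ?_⟩
  simpa [mul_assoc, revPerm_mul_revPerm] using h.mul_revPerm

theorem card_avoiding_revPerm_mul :
    Nat.card {σ : Perm (Fin n) // ¬ContainsPattern σ (revPerm * τ)} =
      Nat.card {σ : Perm (Fin n) // ¬ContainsPattern σ τ} := by
  refine Nat.card_congr ((Equiv.mulLeft revPerm).subtypeEquiv fun σ => not_congr ?_).symm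
  refine ⟨ContainsPattern.revPerm_mul, fun h => ?_⟩
  simpa [← mul_assoc, revPerm_mul_revPerm] using h.revPerm_mul

end Symmetries

section Counts

open Equiv

variable {α : Type*} [LinearOrder α] {n : ℕ}

theorem hasOrderType_one : HasOrderType (α := α) 1 = MinFirst (· < ·) := by
  ext a b c
  simp [HasOrderType, Fin.forall_fin_succ, MinFirst]
  grind

theorem hasOrderType_swap : HasOrderType (α := α) (swap 1 2) = MinFirst (· > ·) := by
  ext a b c
  simp [HasOrderType, Fin.forall_fin_succ, swap_apply_def, MinFirst]
  grind

theorem hasOrderType_swap_mul_revPerm :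
    HasOrderType (α := α) (swap 1 2 * Fin.revPerm) = Pattern231 := by
  ext a b c
  simp [HasOrderType, Fin.forall_fin_succ, swap_apply_def, Pattern231]
  grind

theorem card_avoiding_swap :
    Nat.card {σ : Perm (Fin n) // ¬ContainsPattern σ (swap 1 2)} = catalan n := by
  rw [← card_avoiding_mul_revPerm, card_avoiding_eq_card_avoiders, hasOrderType_swap_mul_revPerm,
    card_avoiders_pattern231, card_univ, Fintype.card_fin]

theorem card_avoiding_one : Nat.card {σ : Perm (Fin n) // ¬ContainsPattern σ 1} = catalan n := by
  rw [card_avoiding_eq_card_avoiders, hasOrderType_one, card_avoiders_minFirst_lt_eq_gt,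
    ← hasOrderType_swap, ← card_avoiding_eq_card_avoiders, card_avoiding_swap]

end Counts

theorem catalan_count_avoiders (n : ℕ) (τ : Equiv.Perm (Fin 3)) :
    Nat.card {σ : Equiv.Perm (Fin n) // ¬ ContainsPattern σ τ} =
      Nat.choose (2 * n) n / (n + 1) := by
  rw [← Nat.centralBinom_eq_two_mul_choose, ← catalan_eq_centralBinom_div]
  -- `123`, `321`, `132`, `231`, `312`, `213`
  have hS3 : ∀ τ : Equiv.Perm (Fin 3), τ = 1 ∨ τ = Fin.revPerm * 1 ∨ τ = Equiv.swap 1 2 ∨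
      τ = Equiv.swap 1 2 * Fin.revPerm ∨ τ = Fin.revPerm * Equiv.swap 1 2 ∨
      τ = Fin.revPerm * (Equiv.swap 1 2 * Fin.revPerm) := by
    decide
  rcases hS3 τ with rfl | rfl | rfl | rfl | rfl | rfl
  · exact card_avoiding_one
  · rw [card_avoiding_revPerm_mul, card_avoiding_one]
  · exact card_avoiding_swap
  · rw [card_avoiding_mul_revPerm, card_avoiding_swap]
  · rw [card_avoiding_revPerm_mul, card_avoiding_swap]
  · rw [card_avoiding_revPerm_mul, card_avoiding_mul_revPerm, card_avoiding_swap]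
end

section
/- The number of 132-avoiding permutations of [n] containing no increasing subsequence of length 3 equals 2^{n-1}, for every n ≥ 1. -/
/-- `σ` avoids the pattern 132. -/
def Avoids132 {n : ℕ} (σ : Equiv.Perm (Fin n)) : Prop :=
  ¬ ∃ i₁ i₂ i₃ : Fin n, i₁ < i₂ ∧ i₂ < i₃ ∧ σ i₁ < σ i₃ ∧ σ i₃ < σ i₂

/-!
A permutation avoids both 123 and 132 exactly when no entry is followed by two larger entries.
For such a permutation of `[m + 2]` the first entry must be one of the two largest values, and
deleting it and standardizing leaves such a permutation of `[m + 1]`; conversely, either of the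
two largest values can be put in front of such a permutation. So the count doubles at each step.
-/

open Equiv Equiv.Perm

/-- Since `p.cycleRange⁻¹` sends `0` to `p` and `j.succ` to `p.succAbove j`, this is
`(p, τ) ↦ Fin.cons p (p.succAbove ∘ τ)` (`Fin.coe_consPermEquiv`). -/
def Fin.consPermEquiv (n : ℕ) : Fin (n + 1) × Perm (Fin n) ≃ Perm (Fin (n + 1)) where
  toFun x := x.1.cycleRange⁻¹ * decomposeFin.symm (0, x.2)
  invFun σ := (σ 0, (decomposeFin ((σ 0).cycleRange * σ)).2)
  left_inv := by
    rintro ⟨p, τ⟩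
    simp
  right_inv σ := by
    obtain ⟨q, τ, hπ⟩ : ∃ q τ, (σ 0).cycleRange * σ = decomposeFin.symm (q, τ) :=
      ⟨_, _, (decomposeFin.symm_apply_apply _).symm⟩
    obtain rfl : q = 0 := by
      simpa using congr($hπ 0).symm
    dsimp only
    rw [hπ, decomposeFin.apply_symm_apply, ← hπ, inv_mul_cancel_left]

theorem Fin.coe_consPermEquiv {n : ℕ} (p : Fin (n + 1)) (τ : Perm (Fin n)) :
    ⇑(consPermEquiv n (p, τ)) = Fin.cons p (p.succAbove ∘ τ) := by
  ext i : 1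
  cases i using Fin.cases <;> simp [consPermEquiv]

def NoTwoLargerAfter {α : Type*} [LT α] {n : ℕ} (f : Fin n → α) : Prop :=
  ∀ ⦃i j k : Fin n⦄, i < j → j < k → f i < f j → ¬ f i < f k

theorem avoids132_and_not_increasing_iff {n : ℕ} (σ : Perm (Fin n)) :
    (Avoids132 σ ∧ ¬ ∃ i₁ i₂ i₃ : Fin n, i₁ < i₂ ∧ i₂ < i₃ ∧ σ i₁ < σ i₂ ∧ σ i₂ < σ i₃) ↔
      NoTwoLargerAfter σ := by
  constructor
  · rintro ⟨h132, h123⟩ i j k hij hjk hj hk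
    rcases lt_trichotomy (σ j) (σ k) with hjk' | hjk' | hjk'
    · exact h123 ⟨i, j, k, hij, hjk, hj, hjk'⟩
    · exact hjk.ne (σ.injective hjk')
    · exact h132 ⟨i, j, k, hij, hjk, hk, hjk'⟩
  · intro h
    exact ⟨fun ⟨i, j, k, hij, hjk, hk, hkj⟩ => h hij hjk (hk.trans hkj) hk,
      fun ⟨i, j, k, hij, hjk, hj, hjk'⟩ => h hij hjk hj (hj.trans hjk')⟩

theorem noTwoLargerAfter_cons_iff {α : Type*} [LT α] {n : ℕ} (a : α) (g : Fin n → α) :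
    NoTwoLargerAfter (Fin.cons a g : Fin (n + 1) → α) ↔
      (∀ ⦃j k : Fin n⦄, j < k → a < g j → ¬ a < g k) ∧ NoTwoLargerAfter g := by
  constructor
  · intro h
    refine ⟨fun j k hjk => h j.succ_pos (Fin.succ_lt_succ_iff.2 hjk), fun i j k hij hjk => ?_⟩
    exact h (Fin.succ_lt_succ_iff.2 hij) (Fin.succ_lt_succ_iff.2 hjk)
  · rintro ⟨h₀, h⟩ i j k hij hjk
    cases j using Fin.cases with
    | zero => exact absurd hij (Fin.not_lt_zero i)
    | succ j =>
    cases k using Fin.cases with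
    | zero => exact absurd hjk (Fin.not_lt_zero _)
    | succ k =>
    cases i using Fin.cases with
    | zero => exact h₀ (Fin.succ_lt_succ_iff.1 hjk)
    | succ i => exact h (Fin.succ_lt_succ_iff.1 hij) (Fin.succ_lt_succ_iff.1 hjk)

theorem StrictMono.noTwoLargerAfter_comp_iff {α β : Type*} [LinearOrder α] [Preorder β]
    {e : α → β} (he : StrictMono e) {n : ℕ} (f : Fin n → α) :
    NoTwoLargerAfter (e ∘ f) ↔ NoTwoLargerAfter f := by
  simp only [NoTwoLargerAfter, Function.comp_apply, he.lt_iff_lt]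

theorem Fin.no_two_gt_succAbove_perm_iff {m : ℕ} (p : Fin (m + 2)) (τ : Perm (Fin (m + 1))) :
    (∀ ⦃j k⦄, j < k → p < p.succAbove (τ j) → ¬ p < p.succAbove (τ k)) ↔
      (Fin.last m).castSucc ≤ p := by
  simp only [Fin.lt_succAbove_iff_le_castSucc, Fin.le_def, Fin.val_castSucc, Fin.val_last]
  constructor
  · intro h
    by_contra! hp
    have hne : τ.symm ⟨p, by omega⟩ ≠ τ.symm (Fin.last m) := by
      simpa [Fin.ext_iff] using hp.ne
    rcases hne.lt_or_gt with hlt | hlt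
    · exact h hlt (by simp) (by simpa using hp.le)
    · exact h hlt (by simpa using hp.le) (by simp)
  · intro hp j k hjk hj hk
    have hj' := (τ j).isLt
    have hk' := (τ k).isLt
    exact hjk.ne (τ.injective (Fin.ext (by omega)))

theorem noTwoLargerAfter_consPermEquiv_iff {m : ℕ} (p : Fin (m + 2)) (τ : Perm (Fin (m + 1))) :
    NoTwoLargerAfter (Fin.consPermEquiv _ (p, τ)) ↔
      (Fin.last m).castSucc ≤ p ∧ NoTwoLargerAfter τ := by
  rw [Fin.coe_consPermEquiv, noTwoLargerAfter_cons_iff,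
    (Fin.strictMono_succAbove p).noTwoLargerAfter_comp_iff, Function.comp_def,
    Fin.no_two_gt_succAbove_perm_iff]

theorem card_noTwoLargerAfter (m : ℕ) :
    Nat.card {σ : Perm (Fin (m + 1)) // NoTwoLargerAfter σ} = 2 ^ m := by
  induction m with
  | zero =>
    have h (σ : Perm (Fin 1)) : NoTwoLargerAfter σ := fun i j k hij hjk =>
      absurd (hij.trans hjk) (by simp [Subsingleton.elim i k])
    simp [Nat.card_congr (Equiv.subtypeUnivEquiv h)]
  | succ m ih =>
    have hsplit : {σ : Perm (Fin (m + 2)) // NoTwoLargerAfter σ} ≃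
        Set.Ici (Fin.last m).castSucc × {τ : Perm (Fin (m + 1)) // NoTwoLargerAfter τ} :=
      ((Fin.consPermEquiv _).subtypeEquiv fun x =>
        (noTwoLargerAfter_consPermEquiv_iff x.1 x.2).symm).symm.trans subtypeProdEquivProd
    rw [Nat.card_congr hsplit, Nat.card_prod, ih, Nat.card_eq_fintype_card, Fintype.card_Ici,
      Fin.card_Ici]
    simp only [Fin.val_castSucc, Fin.val_last, pow_succ']
    congr 1
    omega

/-- The number of 132-avoiding permutations of `[n]` with no increasing subsequence of
length 3 equals `2^(n-1)`, for `n ≥ 1`. -/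
theorem count_no_increasing_three (n : ℕ) (hn : 1 ≤ n) :
    Nat.card {σ : Equiv.Perm (Fin n) //
        Avoids132 σ ∧ ¬ ∃ i₁ i₂ i₃ : Fin n, i₁ < i₂ ∧ i₂ < i₃ ∧ σ i₁ < σ i₂ ∧ σ i₂ < σ i₃} =
      2 ^ (n - 1) := by
  obtain ⟨m, rfl⟩ : ∃ m, n = m + 1 := ⟨n - 1, by omega⟩
  rw [Nat.card_congr (Equiv.subtypeEquivRight avoids132_and_not_increasing_iff),
    card_noTwoLargerAfter, Nat.add_sub_cancel]
end

section
/- With B(t) as in equation (Balone) and C(t) the Catalan generating function, one has B(t) = [2t²-4t+1+(2t-1)√(1-4t)] / [(2t²-t+1)√(1-4t) + (1-t)(1-4t)] as an identity of analytic functions near 0. -/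
/-!
The Catalan series satisfies `t C² = C - 1`, and `√(1 - 4t) = 1 - 2tC`. Modulo the Catalan
relation, twice the numerator and twice the denominator of `B` are exactly the numerator and
denominator of the closed form with `1 - 2tC` in place of the square root, so the identity holds
for any root `C` of the Catalan equation over a field of characteristic `≠ 2`.
-/

section CatalanRelation
variable {R : Type*} [CommRing R] {t C : R}

theorem two_mul_B_numerator_eq (hC : t * C ^ 2 = C - 1) :
    2 * (t ^ 2 * (C - 1) ^ 2) = 2 * t ^ 2 - 4 * t + 1 + (2 * t - 1) * (1 - 2 * t * C) := by
  linear_combination 2 * t * hC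

theorem two_mul_B_denominator_eq (hC : t * C ^ 2 = C - 1) :
    2 * (((1 - t) * (1 - 2 * t * C) + t) * (1 - t - t * C) - t ^ 2 * (C - 1)) =
      (2 * t ^ 2 - t + 1) * (1 - 2 * t * C) + (1 - t) * (1 - 4 * t) := by
  linear_combination 4 * t * (1 - t) * hC

end CatalanRelation

section Field
variable {K : Type*} [Field K] [NeZero (2 : K)]

theorem B_eq_of_catalan_equation {t C : K} (hC : t * C ^ 2 = C - 1) :
    t ^ 2 * (C - 1) ^ 2 /
        (((1 - t) * (1 - 2 * t * C) + t) * (1 - t - t * C) - t ^ 2 * (C - 1)) =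
      (2 * t ^ 2 - 4 * t + 1 + (2 * t - 1) * (1 - 2 * t * C)) /
        ((2 * t ^ 2 - t + 1) * (1 - 2 * t * C) + (1 - t) * (1 - 4 * t)) := by
  rw [← two_mul_B_numerator_eq hC, ← two_mul_B_denominator_eq hC,
    mul_div_mul_left _ _ two_ne_zero]

theorem catalan_equation_of_sq_eq {t s : K} (ht : t ≠ 0) (hs : s ^ 2 = 1 - 4 * t) :
    t * ((1 - s) / (2 * t)) ^ 2 = (1 - s) / (2 * t) - 1 := by
  field_simp
  linear_combination hs

end Field

/-- The closed form for `B(t)` with rationalized numerator: for `0 < t < 1/4`, with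
`C(t) = (1-√(1-4t))/(2t)`,
`t²(C-1)² / [((1-t)(1-2tC)+t)(1-t-tC) - t²(C-1)]
  = [2t²-4t+1+(2t-1)√(1-4t)] / [(2t²-t+1)√(1-4t) + (1-t)(1-4t)]`. -/
theorem B_closed_form (t : ℝ) (ht0 : 0 < t) (ht : t < 1 / 4) :
    (let C := (1 - Real.sqrt (1 - 4 * t)) / (2 * t)
     t ^ 2 * (C - 1) ^ 2 /
      (((1 - t) * (1 - 2 * t * C) + t) * (1 - t - t * C) - t ^ 2 * (C - 1))) =
    (2 * t ^ 2 - 4 * t + 1 + (2 * t - 1) * Real.sqrt (1 - 4 * t)) /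
      ((2 * t ^ 2 - t + 1) * Real.sqrt (1 - 4 * t) + (1 - t) * (1 - 4 * t)) := by
  have hs : Real.sqrt (1 - 4 * t) ^ 2 = 1 - 4 * t := Real.sq_sqrt (by linarith)
  refine (B_eq_of_catalan_equation (catalan_equation_of_sq_eq ht0.ne' hs)).trans ?_
  rw [mul_div_cancel₀ _ (mul_ne_zero two_ne_zero ht0.ne'), sub_sub_cancel]
end
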